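/- If f belongs to the class S*_B, then the second-order Toeplitz determinant T_{2,2}(f) = a_2² − a_3² satisfies |a_2² − a_3²| ≤ 25/16. -/

import Mathlib

open Complex Metric

/-- The `n`-th Taylor coefficient of `f` at `0`. -/
noncomputable def taylorCoeff (f : ℂ → ℂ) (n : ℕ) : ℂ :=
  iteratedDeriv n f 0 / n.factorial

/-- Membership in the class `S*_B`: `f` is analytic on the unit disk, normalized by
`f(0) = 0` and `f'(0) = 1`, and there is a Schwarz function `w` with
`z f'(z) (1 - log(1 + w z)) = f z` on the unit disk. -/
def IsSB (f : ℂ → ℂ) : Prop :=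
  DifferentiableOn ℂ f (ball (0:ℂ) 1) ∧ f 0 = 0 ∧ deriv f 0 = 1 ∧
  ∃ w : ℂ → ℂ, DifferentiableOn ℂ w (ball (0:ℂ) 1) ∧ w 0 = 0 ∧
    (∀ z ∈ ball (0:ℂ) 1, ‖w z‖ < 1) ∧
    (∀ z ∈ ball (0:ℂ) 1, z * deriv f z * (1 - Complex.log (1 + w z)) = f z)

/-!
Write `w(z) = c₁ z + c₂ z² + ⋯`. Comparing Taylor coefficients in `f = z f' (1 - log (1 + w))`
gives `a₂ = c₁` and `a₃ = 3 c₁² / 4 + c₂ / 2`. Schwarz–Pick at `0`, applied to `w(z) / z`, gives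
`|c₂| ≤ 1 - |c₁|²`; hence, with `t = |c₁|² ≤ 1`,
`|a₂² - a₃²| ≤ t + ((t + 2) / 4)² ≤ 25 / 16`.
-/

open Filter Topology Set ComplexConjugate

lemma taylorCoeff_zero (f : ℂ → ℂ) : taylorCoeff f 0 = f 0 := by
  simp [taylorCoeff]

lemma taylorCoeff_one (f : ℂ → ℂ) : taylorCoeff f 1 = deriv f 0 := by
  simp [taylorCoeff]

lemma taylorCoeff_two (f : ℂ → ℂ) : taylorCoeff f 2 = deriv (deriv f) 0 / 2 := by
  simp [taylorCoeff, iteratedDeriv_succ]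

lemma taylorCoeff_deriv (f : ℂ → ℂ) (n : ℕ) :
    taylorCoeff (deriv f) n = (n + 1) * taylorCoeff f (n + 1) := by
  simp only [taylorCoeff, iteratedDeriv_succ', Nat.factorial_succ, Nat.cast_mul]
  field_simp
  push_cast
  ring

lemma Filter.EventuallyEq.taylorCoeff_eq {f g : ℂ → ℂ} (h : f =ᶠ[𝓝 0] g) (n : ℕ) :
    taylorCoeff f n = taylorCoeff g n := by
  rw [taylorCoeff, taylorCoeff, h.iteratedDeriv_eq]

lemma taylorCoeff_mul {f g : ℂ → ℂ} {n : ℕ} (hf : ContDiffAt ℂ n f 0)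
    (hg : ContDiffAt ℂ n g 0) :
    taylorCoeff (fun z => f z * g z) n =
      ∑ i ∈ Finset.range (n + 1), taylorCoeff f i * taylorCoeff g (n - i) := by
  rw [taylorCoeff, iteratedDeriv_fun_mul hf hg, Finset.sum_div]
  refine Finset.sum_congr rfl fun i hi => ?_
  have hin : i ≤ n := Nat.lt_succ_iff.mp (Finset.mem_range.mp hi)
  have hfac : (n.choose i : ℂ) * i.factorial * (n - i).factorial = n.factorial := by
    exact_mod_cast Nat.choose_mul_factorial_mul_factorial hin
  have hchoose : (n.choose i : ℂ) ≠ 0 := by exact_mod_cast (Nat.choose_pos hin).ne'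
  simp only [taylorCoeff, ← hfac, mul_assoc, mul_div_mul_left _ _ hchoose]
  field_simp

lemma taylorCoeff_id_mul {h : ℂ → ℂ} {n : ℕ} (hh : ContDiffAt ℂ (n + 1 : ℕ) h 0) :
    taylorCoeff (fun z => z * h z) (n + 1) = taylorCoeff h n := by
  rw [taylorCoeff_mul (f := fun z => z) contDiffAt_id hh, Finset.sum_eq_single 1]
  · simp [taylorCoeff_one]
  · intro i _ hi
    simp [taylorCoeff, iteratedDeriv_fun_id_zero, hi]
  · simp

lemma taylorCoeff_succ_of_eventuallyEq_mul_deriv_mul {f v : ℂ → ℂ} (hf : AnalyticAt ℂ f 0)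
    (hv : AnalyticAt ℂ v 0) (h : f =ᶠ[𝓝 0] fun z => z * deriv f z * v z) (n : ℕ) :
    taylorCoeff f (n + 1) =
      ∑ i ∈ Finset.range (n + 1), (i + 1) * taylorCoeff f (i + 1) * taylorCoeff v (n - i) := by
  have hassoc : (fun z => z * deriv f z * v z) = fun z => z * (deriv f z * v z) := by
    simp only [mul_assoc]
  rw [h.taylorCoeff_eq, hassoc,
    taylorCoeff_id_mul (h := fun z => deriv f z * v z) (hf.deriv.mul hv).contDiffAt,
    taylorCoeff_mul hf.deriv.contDiffAt hv.contDiffAt]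
  simp only [taylorCoeff_deriv, mul_assoc]

lemma taylorCoeff_one_sub_log_one_add {w : ℂ → ℂ} (hw : AnalyticAt ℂ w 0) (hw0 : w 0 = 0) :
    taylorCoeff (fun z => 1 - log (1 + w z)) 1 = -taylorCoeff w 1 ∧
      taylorCoeff (fun z => 1 - log (1 + w z)) 2 = taylorCoeff w 1 ^ 2 / 2 - taylorCoeff w 2 := by
  have hslit : ∀ᶠ z in 𝓝 0, 1 + w z ∈ slitPlane :=
    (continuousAt_const.add hw.continuousAt).eventually_mem
      (isOpen_slitPlane.mem_nhds (by simp [hw0]))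
  have hderiv : ∀ᶠ z in 𝓝 0,
      HasDerivAt (fun z => 1 - log (1 + w z)) (-(deriv w z / (1 + w z))) z := by
    filter_upwards [hw.eventually_analyticAt, hslit] with z hwz hz
    exact ((hwz.differentiableAt.hasDerivAt.const_add 1).clog hz).const_sub 1
  have hderiv2 : HasDerivAt (fun z => -(deriv w z / (1 + w z)))
      (-((deriv (deriv w) 0 * (1 + w 0) - deriv w 0 * deriv w 0) / (1 + w 0) ^ 2)) 0 :=
    (hw.deriv.differentiableAt.hasDerivAt.div (hw.differentiableAt.hasDerivAt.const_add 1)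
      (by simp [hw0])).neg
  have hderiv_eq : deriv (fun z => 1 - log (1 + w z)) =ᶠ[𝓝 0]
      fun z => -(deriv w z / (1 + w z)) := hderiv.mono fun z hz => hz.deriv
  refine ⟨?_, ?_⟩
  · simp [taylorCoeff_one, hderiv_eq.eq_of_nhds, hw0]
  · rw [taylorCoeff_two, taylorCoeff_two, taylorCoeff_one, hderiv_eq.deriv_eq, hderiv2.deriv,
      hw0]
    ring

lemma norm_sub_le_norm_one_sub_conj_mul {a G : ℂ} (ha : ‖a‖ ≤ 1) (hG : ‖G‖ ≤ 1) :
    ‖G - a‖ ≤ ‖1 - conj a * G‖ := by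
  have key : ‖1 - conj a * G‖ ^ 2 - ‖G - a‖ ^ 2 = (1 - ‖a‖ ^ 2) * (1 - ‖G‖ ^ 2) := by
    apply Complex.ofReal_injective
    push_cast
    simp only [← Complex.conj_mul', map_sub, map_mul, map_one, Complex.conj_conj]
    ring
  rw [← sq_le_sq₀ (norm_nonneg _) (norm_nonneg _)]
  nlinarith [mul_nonneg (sub_nonneg.2 (pow_le_one₀ (n := 2) (norm_nonneg a) ha))
    (sub_nonneg.2 (pow_le_one₀ (n := 2) (norm_nonneg G) hG))]

lemma norm_deriv_le_one_sub_sq_of_mapsTo_ball {g : ℂ → ℂ}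
    (hg : DifferentiableOn ℂ g (ball 0 1)) (hmaps : MapsTo g (ball 0 1) (closedBall 0 1)) :
    ‖deriv g 0‖ ≤ 1 - ‖g 0‖ ^ 2 := by
  set a := g 0
  have hball : ball (0 : ℂ) 1 ∈ 𝓝 0 := ball_mem_nhds 0 one_pos
  have hg_le : ∀ z ∈ ball (0 : ℂ) 1, ‖g z‖ ≤ 1 := fun z hz => by simpa using hmaps hz
  rcases (hg_le 0 (mem_of_mem_nhds hball)).lt_or_eq with ha | ha
  · -- Schwarz's lemma for `g` followed by the disc automorphism sending `a` to `0`.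
    have hden : ∀ z ∈ ball (0 : ℂ) 1, 1 - conj a * g z ≠ 0 := fun z hz => by
      have : ‖conj a * g z‖ < 1 := by
        rw [norm_mul, Complex.norm_conj]
        exact mul_lt_one_of_nonneg_of_lt_one_left (norm_nonneg _) ha (hg_le z hz)
      exact sub_ne_zero.2 fun h => by simp [← h] at this
    set h := fun z => (g z - a) / (1 - conj a * g z)
    have hh_diff : DifferentiableOn ℂ h (ball 0 1) :=
      (hg.sub_const a).div ((differentiableOn_const 1).sub (hg.const_mul _)) hden
    have hh_maps : MapsTo h (ball 0 1) (closedBall (h 0) 1) := fun z hz => by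
      simp only [h, a, sub_self, zero_div, mem_closedBall_zero_iff, norm_div]
      rw [div_le_one (norm_pos_iff.2 (hden z hz))]
      exact norm_sub_le_norm_one_sub_conj_mul ha.le (hg_le z hz)
    have hgd : HasDerivAt g (deriv g 0) 0 := (hg.differentiableAt hball).hasDerivAt
    have hh_deriv : HasDerivAt h (deriv g 0 / (1 - ‖a‖ ^ 2 : ℝ)) 0 := by
      have hden0 : (1 : ℂ) - conj a * a ≠ 0 := hden 0 (mem_of_mem_nhds hball)
      refine ((hgd.sub_const a).div ((hgd.const_mul (conj a)).const_sub 1) hden0).congr_deriv ?_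
      rw [Complex.conj_mul'] at hden0 ⊢
      push_cast
      field_simp
      ring
    have hpos : (0 : ℝ) < 1 - ‖a‖ ^ 2 := by nlinarith [norm_nonneg a]
    have := Complex.norm_deriv_le_one_of_mapsTo_ball hh_diff hh_maps one_pos
    rwa [hh_deriv.deriv, norm_div, Complex.norm_real, Real.norm_of_nonneg hpos.le,
      div_le_one hpos] at this
  · have hmax : IsLocalMax (norm ∘ g) 0 :=
      Filter.mem_of_superset hball fun z hz => by simpa [← ha] using hg_le z hz
    have hconst : g =ᶠ[𝓝 0] fun _ => a :=
      Complex.eventually_eq_of_isLocalMax_norm (hg.eventually_differentiableAt hball) hmax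
    simp [hconst.deriv_eq, show ‖a‖ = 1 from ha]

lemma norm_taylorCoeff_two_le_one_sub_sq {w : ℂ → ℂ} (hw : DifferentiableOn ℂ w (ball 0 1))
    (hw0 : w 0 = 0) (hmaps : MapsTo w (ball 0 1) (closedBall 0 1)) :
    ‖taylorCoeff w 2‖ ≤ 1 - ‖taylorCoeff w 1‖ ^ 2 := by
  have hball : ball (0 : ℂ) 1 ∈ 𝓝 0 := ball_mem_nhds 0 one_pos
  set g := dslope w 0
  have hg : DifferentiableOn ℂ g (ball 0 1) := (Complex.differentiableOn_dslope hball).2 hw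
  have hg_maps : MapsTo g (ball 0 1) (closedBall 0 1) := fun z hz => by
    simpa using Complex.norm_dslope_le_div_of_mapsTo_ball hw (by simpa [hw0] using hmaps) hz
  have hwg : w = fun z => z * g z := funext fun z => by
    simpa [hw0] using (sub_smul_dslope w 0 z).symm
  have hga : AnalyticAt ℂ g 0 := hg.analyticAt hball
  rw [hwg, taylorCoeff_id_mul hga.contDiffAt, taylorCoeff_id_mul (n := 0) hga.contDiffAt,
    taylorCoeff_zero, taylorCoeff_one]
  exact norm_deriv_le_one_sub_sq_of_mapsTo_ball hg hg_maps

lemma norm_sq_sub_sq_le_of_norm_le_one_sub_sq {c₁ c₂ : ℂ} (h : ‖c₂‖ ≤ 1 - ‖c₁‖ ^ 2) :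
    ‖c₁ ^ 2 - (3 / 4 * c₁ ^ 2 + c₂ / 2) ^ 2‖ ≤ 25 / 16 := by
  have hc₁ : ‖c₁‖ ^ 2 ≤ 1 := by linarith [norm_nonneg c₂]
  have hsum : ‖3 / 4 * c₁ ^ 2 + c₂ / 2‖ ≤ (‖c₁‖ ^ 2 + 2) / 4 :=
    calc ‖3 / 4 * c₁ ^ 2 + c₂ / 2‖ ≤ 3 / 4 * ‖c₁‖ ^ 2 + ‖c₂‖ / 2 := by
          refine (norm_add_le _ _).trans_eq ?_
          simp [norm_pow]
      _ ≤ (‖c₁‖ ^ 2 + 2) / 4 := by linarith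
  calc ‖c₁ ^ 2 - (3 / 4 * c₁ ^ 2 + c₂ / 2) ^ 2‖
      ≤ ‖c₁‖ ^ 2 + ‖3 / 4 * c₁ ^ 2 + c₂ / 2‖ ^ 2 :=
        (norm_sub_le _ _).trans_eq (by rw [norm_pow, norm_pow])
    _ ≤ ‖c₁‖ ^ 2 + ((‖c₁‖ ^ 2 + 2) / 4) ^ 2 := by gcongr
    _ ≤ 25 / 16 := by nlinarith [sq_nonneg ‖c₁‖]

theorem toeplitz_T22 (f : ℂ → ℂ) (hf : IsSB f) :
    ‖(taylorCoeff f 2) ^ 2 - (taylorCoeff f 3) ^ 2‖ ≤ 25 / 16 := by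
  obtain ⟨hfd, -, hf1, w, hwd, hw0, hwb, heq⟩ := hf
  have hball : ball (0 : ℂ) 1 ∈ 𝓝 0 := ball_mem_nhds 0 one_pos
  have hwa : AnalyticAt ℂ w 0 := hwd.analyticAt hball
  obtain ⟨hv₁, hv₂⟩ := taylorCoeff_one_sub_log_one_add hwa hw0
  set v := fun z => 1 - log (1 + w z)
  have hva : AnalyticAt ℂ v 0 :=
    analyticAt_const.sub ((analyticAt_const.add hwa).clog (by simp [hw0]))
  have hrel : f =ᶠ[𝓝 0] fun z => z * deriv f z * v z :=
    Filter.mem_of_superset hball fun z hz => (heq z hz).symm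
  have recursion := taylorCoeff_succ_of_eventuallyEq_mul_deriv_mul (hfd.analyticAt hball) hva hrel
  have ha₁ : taylorCoeff f 1 = 1 := by rw [taylorCoeff_one, hf1]
  have hv₀ : taylorCoeff v 0 = 1 := by simp [taylorCoeff_zero, v, hw0]
  have ha₂ : taylorCoeff f 2 = taylorCoeff w 1 := by
    have := recursion 1
    simp only [Finset.sum_range_succ, Finset.sum_range_zero, ha₁, hv₀, hv₁] at this
    push_cast at this
    linear_combination -this
  have ha₃ : taylorCoeff f 3 = 3 / 4 * taylorCoeff w 1 ^ 2 + taylorCoeff w 2 / 2 := by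
    have := recursion 2
    simp only [Finset.sum_range_succ, Finset.sum_range_zero, ha₁, ha₂, hv₀, hv₁, hv₂] at this
    push_cast at this
    linear_combination -this / 2
  rw [ha₂, ha₃]
  exact norm_sq_sub_sq_le_of_norm_le_one_sub_sq (norm_taylorCoeff_two_le_one_sub_sq hwd hw0
    fun z hz => mem_closedBall_zero_iff.2 (hwb z hz).le)
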